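/- With the setup of the previous bijection, for a tuple Y = (Y₀,...,Y_{n−1}) with Y_i ⊆ R_{i+1}^μ, |Y_i| = α_i, the length of the corresponding minimal coset representative w = g⁻¹(Y) ∈ 𝔖_μ ∩ 𝒟_δ equals Σ_{i=0}^{n−1} ( Σ_{k ∈ Y_i} k − Σ_{j=1}^{α_i} (μ_{0,i} + j) ), i.e., Σ_i (Σ_{k∈Y_i} k − α_i μ_{0,i} − α_i(α_i+1)/2). -/

import Mathlib

/-!
The blocks `Ioc (M i) (M (i + 1))` are `w`-invariant intervals, so every inversion of `w` lies
inside one block, and on a block `w` has as many inversions as `w⁻¹`. On a block `w⁻¹` is a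
shuffle: increasing on the initial segment `X` of size `α_i` and on the rest `X'`. Hence an
inversion of `w⁻¹` is a pair `x ∈ X`, `y ∈ X'` with `w⁻¹ y < w⁻¹ x`, and for fixed `x` there are
`w⁻¹ x - x` of them: the `w⁻¹ x - M i - 1` block elements below `w⁻¹ x` are values of `w⁻¹`,
and exactly `x - M i - 1` of them are values on `X`.
-/

open Finset

section Inversions

variable {α : Type*} [LinearOrder α]

def inversions (s : Finset α) (w : α → α) : Finset (α × α) :=
  (s ×ˢ s).filter fun p => p.1 < p.2 ∧ w p.2 < w p.1

lemma image_inv_of_image_eq {s : Finset α} {w : Equiv.Perm α} (hs : s.image w = s) :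
    s.image ⇑w⁻¹ = s := by
  conv_lhs => rw [← hs, image_image]
  simp

lemma card_inversions_inv {s : Finset α} {w : Equiv.Perm α} (hs : s.image w = s) :
    #(inversions s w) = #(inversions s ⇑w⁻¹) := by
  have hw : ∀ x ∈ s, w x ∈ s := fun x hx => hs ▸ mem_image_of_mem w hx
  have hw' : ∀ x ∈ s, w⁻¹ x ∈ s := fun x hx => image_inv_of_image_eq hs ▸ mem_image_of_mem _ hx
  refine card_nbij' (fun p => (w p.2, w p.1)) (fun p => (w⁻¹ p.2, w⁻¹ p.1)) ?_ ?_ ?_ ?_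
  · rintro ⟨x, y⟩ hp
    simp only [inversions, coe_filter, mem_product, Set.mem_ofPred_eq] at hp ⊢
    exact ⟨⟨hw y hp.1.2, hw x hp.1.1⟩, hp.2.2, by simpa using hp.2.1⟩
  · rintro ⟨x, y⟩ hp
    simp only [inversions, coe_filter, mem_product, Set.mem_ofPred_eq] at hp ⊢
    exact ⟨⟨hw' y hp.1.2, hw' x hp.1.1⟩, hp.2.2, by simpa using hp.2.1⟩
  all_goals rintro ⟨x, y⟩ _; simp

lemma card_filter_product_apply_lt (s t : Finset α) (w : α → α) :
    #((s ×ˢ t).filter fun p : α × α => w p.2 < w p.1)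
      = ∑ x ∈ s, #(t.filter fun y => w y < w x) := by
  simp only [card_filter, sum_product]

lemma card_filter_apply_lt_of_image_eq {s : Finset α} {w : Equiv.Perm α} (hs : s.image w = s)
    (t : α) : #(s.filter fun y => w y < t) = #(s.filter (· < t)) := by
  conv_rhs => rw [← hs, filter_image]
  exact (card_image_of_injective _ w.injective).symm

variable [LocallyFiniteOrder α] {M : ℕ → α}

lemma Monotone.exists_mem_Ioc_succ (hM : Monotone M) {n : ℕ} {x : α}
    (hx : x ∈ Ioc (M 0) (M n)) : ∃ i < n, x ∈ Ioc (M i) (M (i + 1)) := by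
  rw [← mem_coe, coe_Ioc, ← hM.biUnion_Ico_Ioc_map_succ 0 n] at hx
  obtain ⟨i, hi, hxi⟩ := Set.mem_iUnion₂.1 hx
  exact ⟨i, (Set.mem_Ico.1 hi).2, by simpa using hxi⟩

lemma Monotone.lt_of_mem_Ioc_succ (hM : Monotone M) {i j : ℕ} (hij : i < j) {x y : α}
    (hx : x ∈ Ioc (M i) (M (i + 1))) (hy : y ∈ Ioc (M j) (M (j + 1))) : x < y :=
  (mem_Ioc.1 hx).2.trans_lt ((hM hij).trans_lt (mem_Ioc.1 hy).1)

lemma inversions_Ioc_eq_biUnion (hM : Monotone M) {w : α → α} {n : ℕ}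
    (hw : ∀ i < n, ∀ x ∈ Ioc (M i) (M (i + 1)), w x ∈ Ioc (M i) (M (i + 1))) :
    inversions (Ioc (M 0) (M n)) w
      = (range n).biUnion fun i => inversions (Ioc (M i) (M (i + 1))) w := by
  ext ⟨x, y⟩
  simp only [inversions, mem_filter, mem_product, mem_biUnion, mem_range]
  constructor
  · rintro ⟨⟨hx, hy⟩, hxy, hwxy⟩
    obtain ⟨i, hi, hxi⟩ := hM.exists_mem_Ioc_succ hx
    obtain ⟨j, hj, hyj⟩ := hM.exists_mem_Ioc_succ hy
    obtain rfl : i = j := by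
      rcases lt_trichotomy i j with h | h | h
      · exact absurd (hM.lt_of_mem_Ioc_succ h (hw i hi x hxi) (hw j hj y hyj)) hwxy.not_gt
      · exact h
      · exact absurd (hM.lt_of_mem_Ioc_succ h hyj hxi) hxy.not_gt
    exact ⟨i, hi, ⟨hxi, hyj⟩, hxy, hwxy⟩
  · rintro ⟨i, hi, ⟨hx, hy⟩, hxy⟩
    have hsub : Ioc (M i) (M (i + 1)) ⊆ Ioc (M 0) (M n) :=
      Ioc_subset_Ioc (hM (Nat.zero_le i)) (hM hi)
    exact ⟨⟨hsub hx, hsub hy⟩, hxy⟩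

lemma card_inversions_Ioc_eq_sum (hM : Monotone M) {w : α → α} {n : ℕ}
    (hw : ∀ i < n, ∀ x ∈ Ioc (M i) (M (i + 1)), w x ∈ Ioc (M i) (M (i + 1))) :
    #(inversions (Ioc (M 0) (M n)) w) = ∑ i ∈ range n, #(inversions (Ioc (M i) (M (i + 1))) w) := by
  rw [inversions_Ioc_eq_biUnion hM hw, card_biUnion]
  intro i _ j _ hij
  have hdisj : Disjoint (Ioc (M i) (M (i + 1))) (Ioc (M j) (M (j + 1))) := by
    rw [← disjoint_coe, coe_Ioc, coe_Ioc]
    simpa using hM.pairwise_disjoint_on_Ioc_succ hij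
  exact disjoint_filter_filter (disjoint_product.2 (Or.inl hdisj))

lemma inversions_Ioc_of_strictMonoOn {a b c : α} {v : α → α}
    (h₁ : StrictMonoOn v ↑(Ioc a b)) (h₂ : StrictMonoOn v ↑(Ioc b c)) :
    inversions (Ioc a c) v = (Ioc a b ×ˢ Ioc b c).filter fun p => v p.2 < v p.1 := by
  ext ⟨x, y⟩
  simp only [inversions, mem_filter, mem_product, mem_Ioc]
  constructor
  · rintro ⟨⟨⟨hax, hxc⟩, hay, hyc⟩, hxy, hvxy⟩
    have hxb : x ≤ b := not_lt.1 fun hbx =>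
      hvxy.not_gt (h₂ (by simp [hbx, hxc]) (by simp [hbx.trans hxy, hyc]) hxy)
    have hby : b < y := not_le.1 fun hyb =>
      hvxy.not_gt (h₁ (by simp [hax, hxy.le.trans hyb]) (by simp [hax.trans hxy, hyb]) hxy)
    exact ⟨⟨⟨hax, hxb⟩, hby, hyc⟩, hvxy⟩
  · rintro ⟨⟨⟨hax, hxb⟩, hby, hyc⟩, hvxy⟩
    exact ⟨⟨⟨hax, hxb.trans (hby.le.trans hyc)⟩, hax.trans_le (hxb.trans hby.le), hyc⟩,
      hxb.trans_lt hby, hvxy⟩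

end Inversions

lemma card_filter_apply_lt_eq_sub {a b c : ℕ} (hab : a ≤ b) (hbc : b ≤ c) {v : Equiv.Perm ℕ}
    (hv : (Ioc a c).image v = Ioc a c) (h₁ : StrictMonoOn v ↑(Ioc a b)) {x : ℕ}
    (hx : x ∈ Ioc a b) : (#((Ioc b c).filter fun y => v y < v x) : ℤ) = v x - x := by
  have hvx : v x ∈ Ioc a c := hv ▸ mem_image_of_mem v (Ioc_subset_Ioc_right hbc hx)
  have hsplit : #((Ioc a c).filter fun y => v y < v x)
      = #((Ioc a b).filter fun y => v y < v x) + #((Ioc b c).filter fun y => v y < v x) := by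
    rw [← Ioc_union_Ioc_eq_Ioc hab hbc, filter_union, card_union_of_disjoint]
    exact disjoint_filter_filter (Ioc_disjoint_Ioc_of_le le_rfl)
  have hall : #((Ioc a c).filter fun y => v y < v x) = v x - 1 - a := by
    rw [card_filter_apply_lt_of_image_eq hv, ← Nat.card_Ioc]
    congr 1
    ext y
    simp only [mem_filter, mem_Ioc] at hvx ⊢
    omega
  have hleft : #((Ioc a b).filter fun y => v y < v x) = x - 1 - a := by
    rw [filter_congr fun y hy => h₁.lt_iff_lt hy hx, ← Nat.card_Ioc]
    congr 1
    ext y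
    simp only [mem_filter, mem_Ioc] at hx ⊢
    omega
  simp only [mem_Ioc] at hx hvx
  omega

lemma card_inversions_Ioc_of_strictMonoOn_inv {a b c : ℕ} (hab : a ≤ b) (hbc : b ≤ c)
    {w : Equiv.Perm ℕ} (hw : (Ioc a c).image w = Ioc a c)
    (h₁ : StrictMonoOn ⇑w⁻¹ ↑(Ioc a b)) (h₂ : StrictMonoOn ⇑w⁻¹ ↑(Ioc b c)) :
    (#(inversions (Ioc a c) w) : ℤ)
      = ∑ k ∈ (Ioc a b).image ⇑w⁻¹, (k : ℤ) - ∑ x ∈ Ioc a b, (x : ℤ) := by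
  rw [card_inversions_inv hw, inversions_Ioc_of_strictMonoOn h₁ h₂,
    card_filter_product_apply_lt, sum_image fun x _ y _ h => w⁻¹.injective h, ← sum_sub_distrib]
  push_cast
  exact sum_congr rfl fun x hx =>
    card_filter_apply_lt_eq_sub hab hbc (image_inv_of_image_eq hw) h₁ hx

lemma sum_Icc_one_add_eq_sum_Ioc (m a : ℕ) :
    ∑ j ∈ Icc 1 a, ((m : ℤ) + j) = ∑ x ∈ Ioc m (m + a), (x : ℤ) := by
  rw [← Icc_add_one_left_eq_Ioc, ← image_add_left_Icc, sum_image fun x _ y _ h => by simpa using h]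
  push_cast
  rfl

theorem stmt14_general (n r : ℕ)
    (μ β : ℕ → ℕ)
    (hsum : ∑ i ∈ Finset.range n, μ i = r)
    (M : ℕ → ℕ) (hM : ∀ i, M i = ∑ j ∈ Finset.range i, μ j)
    (w : Equiv.Perm ℕ)
    (hwμ : ∀ i < n, ⇑w '' ↑(Finset.Ioc (M i) (M (i + 1)))
        = ↑(Finset.Ioc (M i) (M (i + 1))))
    (hwδ1 : ∀ i < n, StrictMonoOn (⇑w⁻¹) ↑(Finset.Ioc (M i) (M i + (μ i - β i))))
    (hwδ2 : ∀ i < n, StrictMonoOn (⇑w⁻¹) ↑(Finset.Ioc (M i + (μ i - β i)) (M (i + 1)))) :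
    ((((Finset.Icc 1 r ×ˢ Finset.Icc 1 r).filter
        (fun p : ℕ × ℕ => p.1 < p.2 ∧ w p.2 < w p.1)).card : ℤ))
      = ∑ i ∈ Finset.range n,
          ((∑ k ∈ (Finset.Ioc (M i) (M i + (μ i - β i))).image ⇑w⁻¹, (k : ℤ))
            - ∑ j ∈ Finset.Icc 1 (μ i - β i), ((M i : ℤ) + (j : ℤ))) := by
  have hM_succ (i : ℕ) : M (i + 1) = M i + μ i := by rw [hM, hM, sum_range_succ]
  have hM_mono : Monotone M := monotone_nat_of_le_succ fun i => by rw [hM_succ]; omega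
  have hblock : ∀ i < n, (Ioc (M i) (M (i + 1))).image w = Ioc (M i) (M (i + 1)) :=
    fun i hi => coe_injective (by rw [coe_image, hwμ i hi])
  have hIcc : Icc 1 r = Ioc (M 0) (M n) := by
    rw [hM, hM, hsum, range_zero, sum_empty, ← Icc_add_one_left_eq_Ioc, zero_add]
  change (#(inversions (Icc 1 r) w) : ℤ) = _
  rw [hIcc, card_inversions_Ioc_eq_sum hM_mono
    fun i hi x hx => hblock i hi ▸ mem_image_of_mem w hx]
  push_cast
  refine sum_congr rfl fun i hi => ?_
  have hi : i < n := mem_range.1 hi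
  rw [card_inversions_Ioc_of_strictMonoOn_inv le_self_add (by rw [hM_succ]; omega) (hblock i hi)
    (hwδ1 i hi) (hwδ2 i hi), sum_Icc_one_add_eq_sum_Ioc]

/-- With the setup of the bijection `g : w ↦ (w⁻¹X₀,…,w⁻¹X_{n−1})`
(`μ ∈ Λ(n,r)` with cumulative sums `M`, `β ≤ μ`, `α_i = μ_i − β_i`,
`X_i` the initial segment of size `α_i` of the block `R_{i+1}^μ`): for any
minimal coset representative `w ∈ 𝒟_δ ∩ 𝔖_μ`, the inversion-count length of
`w` equals `Σ_{i=0}^{n−1} ( Σ_{k ∈ w⁻¹X_i} k − Σ_{j=1}^{α_i} (M_i + j) )`.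
Permutations are realized in `Equiv.Perm ℕ`, fixing `0` and everything
above `r`. -/
theorem stmt14 (n r : ℕ) (hn : 1 ≤ n) (hr : 1 ≤ r)
    (μ β : ℕ → ℕ) (hβ : ∀ i < n, β i ≤ μ i)
    (hsum : ∑ i ∈ Finset.range n, μ i = r)
    (M : ℕ → ℕ) (hM : ∀ i, M i = ∑ j ∈ Finset.range i, μ j)
    (w : Equiv.Perm ℕ)
    (hwfix : ∀ x : ℕ, x = 0 ∨ r < x → w x = x)
    (hwμ : ∀ i < n, ⇑w '' ↑(Finset.Ioc (M i) (M (i + 1)))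
        = ↑(Finset.Ioc (M i) (M (i + 1))))
    (hwδ1 : ∀ i < n, StrictMonoOn (⇑w⁻¹) ↑(Finset.Ioc (M i) (M i + (μ i - β i))))
    (hwδ2 : ∀ i < n, StrictMonoOn (⇑w⁻¹) ↑(Finset.Ioc (M i + (μ i - β i)) (M (i + 1)))) :
    ((((Finset.Icc 1 r ×ˢ Finset.Icc 1 r).filter
        (fun p : ℕ × ℕ => p.1 < p.2 ∧ w p.2 < w p.1)).card : ℤ))
      = ∑ i ∈ Finset.range n,
          ((∑ k ∈ (Finset.Ioc (M i) (M i + (μ i - β i))).image ⇑w⁻¹, (k : ℤ))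
            - ∑ j ∈ Finset.Icc 1 (μ i - β i), ((M i : ℤ) + (j : ℤ))) :=
  stmt14_general n r μ β hsum M hM w hwμ hwδ1 hwδ2
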